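/- Suppose a family of functions η_k : [0,T] → H₀²(Γ) satisfies a uniform bound ‖∂_t η_k‖_{L²(0,T;L²(Γ))} ≤ C and ‖η_k‖_{L^∞(0,T;H₀²(Γ))} ≤ C, and η_k(0) = η₀ with η₀ + 1 ≥ c > 0 pointwise. Then, using the interpolation ‖f‖_{H^{3/2}} ≤ ‖f‖_{L²}^{1/4}‖f‖_{H²}^{3/4} and the embedding H^{3/2}(Γ) ↪ C(Γ̄), there exists T' > 0 depending only on C and c (not on k) such that 1 + η_k(t,X) ≥ c/2 > 0 for all t ∈ [0,T'], X ∈ Γ̄, and all k. -/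

import Mathlib

/-!
The displacement `η k t - η₀` is `O(t)` in `L²` and bounded in `H²`, so by interpolation its
`H^{3/2}` norm, and hence by the embedding its sup norm, is `O(t^{1/4})` uniformly in `k`.
Taking `T'` so small that this is at most `c / 2` keeps `1 + η k t ≥ c - c / 2`.
-/

open Set

lemma abs_le_of_interpolation {Γ : Type*} (NL2 NH2 NH32 : (Γ → ℝ) → ℝ) {Ce p q a b : ℝ}
    (hCe : 0 ≤ Ce) (hp : 0 ≤ p) (hq : 0 ≤ q) (f : Γ → ℝ) (X : Γ)
    (hNL2 : 0 ≤ NL2 f) (hNH2 : 0 ≤ NH2 f)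
    (hinterp : NH32 f ≤ NL2 f ^ p * NH2 f ^ q) (hembed : |f X| ≤ Ce * NH32 f)
    (ha : NL2 f ≤ a) (hb : NH2 f ≤ b) :
    |f X| ≤ Ce * (a ^ p * b ^ q) :=
  calc |f X| ≤ Ce * NH32 f := hembed
    _ ≤ Ce * (NL2 f ^ p * NH2 f ^ q) := mul_le_mul_of_nonneg_left hinterp hCe
    _ ≤ Ce * (a ^ p * b ^ q) := by
      have ha₀ : 0 ≤ a := hNL2.trans ha
      gcongr

lemma exists_pos_forall_mem_Icc_mul_rpow_le {K p ε : ℝ} (hK : 0 < K) (hp : 0 < p)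
    (hε : 0 < ε) : ∃ δ > 0, ∀ s ∈ Icc 0 δ, K * s ^ p ≤ ε := by
  refine ⟨(ε / K) ^ p⁻¹, by positivity, fun s hs => ?_⟩
  have hsp : s ^ p ≤ ε / K := by
    calc s ^ p ≤ ((ε / K) ^ p⁻¹) ^ p := Real.rpow_le_rpow hs.1 hs.2 hp.le
      _ = ε / K := Real.rpow_inv_rpow (by positivity) hp.ne'
  calc K * s ^ p ≤ K * (ε / K) := mul_le_mul_of_nonneg_left hsp hK.le
    _ = ε := mul_div_cancel₀ ε hK.ne'

theorem stmt10_general {Γ : Type*} (T C c Ce : ℝ) (hC : 0 < C) (hc : 0 < c)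
    (hCe : 0 < Ce)
    (NL2 NH2 NH32 : (Γ → ℝ) → ℝ)
    (η : ℕ → ℝ → Γ → ℝ) (η₀ : Γ → ℝ)
    (hNL2 : ∀ f, 0 ≤ NL2 f) (hNH2 : ∀ f, 0 ≤ NH2 f)
    (hinterp : ∀ f, NH32 f ≤ NL2 f ^ ((1:ℝ)/4) * NH2 f ^ ((3:ℝ)/4))
    (hembed : ∀ f X, |f X| ≤ Ce * NH32 f)
    (hL2 : ∀ k, ∀ t ∈ Set.Icc (0:ℝ) T, NL2 (η k t - η k 0) ≤ C * t)
    (hH2 : ∀ k, ∀ t ∈ Set.Icc (0:ℝ) T, NH2 (η k t - η k 0) ≤ 2 * C)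
    (hinit : ∀ k, η k 0 = η₀) (h0 : ∀ X, c ≤ η₀ X + 1) :
    ∃ T' > 0, ∀ k, ∀ t ∈ Set.Icc (0:ℝ) (min T T'), ∀ X, c / 2 ≤ 1 + η k t X := by
  obtain ⟨δ, hδ, hsmall⟩ := exists_pos_forall_mem_Icc_mul_rpow_le
    (K := Ce * (2 * C) ^ ((3:ℝ)/4)) (p := (1:ℝ)/4) (by positivity) (by norm_num) (half_pos hc)
  refine ⟨δ / C, div_pos hδ hC, fun k t ht X => ?_⟩
  have htT : t ∈ Icc 0 T := ⟨ht.1, ht.2.trans (min_le_left _ _)⟩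
  have hCt : C * t ∈ Icc 0 δ :=
    ⟨mul_nonneg hC.le ht.1, (le_div_iff₀' hC).mp (ht.2.trans (min_le_right _ _))⟩
  have hdisp : |(η k t - η k 0) X| ≤ c / 2 :=
    calc |(η k t - η k 0) X|
        ≤ Ce * ((C * t) ^ ((1:ℝ)/4) * (2 * C) ^ ((3:ℝ)/4)) :=
          abs_le_of_interpolation NL2 NH2 NH32 hCe.le (by norm_num) (by norm_num) _ X
            (hNL2 _) (hNH2 _) (hinterp _) (hembed _ X) (hL2 k t htT) (hH2 k t htT)
      _ = Ce * (2 * C) ^ ((3:ℝ)/4) * (C * t) ^ ((1:ℝ)/4) := by ring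
      _ ≤ c / 2 := hsmall _ hCt
  rw [hinit k, Pi.sub_apply] at hdisp
  linarith [(abs_le.mp hdisp).1, h0 X]

theorem stmt10 {Γ : Type*} (T C c Ce : ℝ) (hT : 0 < T) (hC : 0 < C) (hc : 0 < c)
    (hCe : 0 < Ce)
    (NL2 NH2 NH32 Nsup : (Γ → ℝ) → ℝ)
    (η : ℕ → ℝ → Γ → ℝ) (η₀ : Γ → ℝ)
    (hNL2 : ∀ f, 0 ≤ NL2 f) (hNH2 : ∀ f, 0 ≤ NH2 f)
    (hinterp : ∀ f, NH32 f ≤ NL2 f ^ ((1:ℝ)/4) * NH2 f ^ ((3:ℝ)/4))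
    (hembed : ∀ f X, |f X| ≤ Ce * NH32 f)
    (hsup : ∀ f, Nsup f = ⨆ X, |f X|)
    (hL2 : ∀ k, ∀ t ∈ Set.Icc (0:ℝ) T, NL2 (η k t - η k 0) ≤ C * t)
    (hH2 : ∀ k, ∀ t ∈ Set.Icc (0:ℝ) T, NH2 (η k t - η k 0) ≤ 2 * C)
    (hinit : ∀ k, η k 0 = η₀) (h0 : ∀ X, c ≤ η₀ X + 1) :
    ∃ T' > 0, ∀ k, ∀ t ∈ Set.Icc (0:ℝ) (min T T'), ∀ X, c / 2 ≤ 1 + η k t X :=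
  stmt10_general T C c Ce hC hc hCe NL2 NH2 NH32 η η₀ hNL2 hNH2 hinterp hembed hL2 hH2 hinit h0
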